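/- arXiv:1610.02933 — 4 statements merged into one kernel-verified Lean document; each statement's English description precedes it below -/
import Mathlib

section
/- The arcsine function is ε-Lipschitz on [0, 1]: for every ε with 0 < ε < π/2 − 1, there exists τ(ε) ∈ [0, 1) (the unique root on [0,1) of the equation (π/2 − ε − arcsin τ)·√(1 − τ²) = 1 − τ) such that for all x, y ∈ [0, 1], |arcsin x − arcsin y| ≤ (1 − τ(ε)²)^(−1/2)·|x − y| + ε. -/
/-!
With `L = (1 - τ²)^(-1/2) = arcsin' τ`, convexity of `arcsin` on `[0, 1]` makes
`g t = arcsin t - L t` decrease on `[0, τ]` and increase on `[τ, 1]`, so for `y ≤ x` the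
increment `g x - g y` is at most `g 1 - g τ = π/2 - arcsin τ - L (1 - τ)`. The defining
equation of `τ` says exactly that this gap equals `ε`, and a root `τ ∈ [0, cos ε]` exists by
the intermediate value theorem.
-/

open Real Set

lemma sub_le_sub_of_antitoneOn_of_monotoneOn {α : Type*} [LinearOrder α] {g : α → ℝ}
    {a τ b x y : α} (hanti : AntitoneOn g (Icc a τ)) (hmono : MonotoneOn g (Icc τ b))
    (hay : a ≤ y) (hyx : y ≤ x) (hxb : x ≤ b) (hτb : τ ≤ b) :
    g x - g y ≤ g b - g τ := by
  have hgb : g τ ≤ g b := hmono ⟨le_rfl, hτb⟩ ⟨hτb, le_rfl⟩ hτb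
  rcases le_total x τ with hxτ | hτx
  · linarith [hanti ⟨hay, hyx.trans hxτ⟩ ⟨hay.trans hyx, hxτ⟩ hyx]
  have hgx : g x ≤ g b := hmono ⟨hτx, hxb⟩ ⟨hτb, le_rfl⟩ hxb
  have hgy : g τ ≤ g y := by
    rcases le_total y τ with hyτ | hτy
    · exact hanti ⟨hay, hyτ⟩ ⟨hay.trans hyτ, le_rfl⟩ hyτ
    · exact hmono ⟨le_rfl, hτb⟩ ⟨hτy, hyx.trans hxb⟩ hτy
  linarith

lemma abs_sub_le_of_monotoneOn {s : Set ℝ} {f : ℝ → ℝ} {L ε : ℝ} (hf : MonotoneOn f s)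
    (h : ∀ x ∈ s, ∀ y ∈ s, y ≤ x → f x - f y ≤ L * (x - y) + ε) {x y : ℝ}
    (hx : x ∈ s) (hy : y ∈ s) : |f x - f y| ≤ L * |x - y| + ε := by
  rcases le_total y x with hyx | hxy
  · rw [abs_of_nonneg (sub_nonneg.2 (hf hy hx hyx)), abs_of_nonneg (sub_nonneg.2 hyx)]
    exact h x hx y hy hyx
  · rw [abs_sub_comm, abs_sub_comm x, abs_of_nonneg (sub_nonneg.2 (hf hx hy hxy)),
      abs_of_nonneg (sub_nonneg.2 hxy)]
    exact h y hy x hx hxy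

namespace Real

lemma inv_sqrt_one_sub_sq_le {s t : ℝ} (hs : 0 ≤ s) (hst : s ≤ t) (ht : t < 1) :
    (√(1 - s ^ 2))⁻¹ ≤ (√(1 - t ^ 2))⁻¹ :=
  inv_anti₀ (sqrt_pos.2 (by nlinarith)) (sqrt_le_sqrt (by nlinarith))

lemma hasDerivAt_arcsin_sub_mul (L : ℝ) {t : ℝ} (h₁ : -1 < t) (h₂ : t < 1) :
    HasDerivAt (fun t => arcsin t - L * t) ((√(1 - t ^ 2))⁻¹ - L) t :=
  ((hasDerivAt_arcsin h₁.ne' h₂.ne).sub ((hasDerivAt_id t).const_mul L)).congr_deriv (by simp)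

lemma antitoneOn_arcsin_sub_mul {τ : ℝ} (hτ : τ < 1) :
    AntitoneOn (fun t => arcsin t - (√(1 - τ ^ 2))⁻¹ * t) (Icc 0 τ) := by
  refine antitoneOn_of_hasDerivWithinAt_nonpos (convex_Icc 0 τ)
    (f' := fun t => (√(1 - t ^ 2))⁻¹ - (√(1 - τ ^ 2))⁻¹)
    (continuous_arcsin.sub (continuous_const_mul _)).continuousOn
    (fun t ht => ?_) (fun t ht => ?_)
  all_goals rw [interior_Icc] at ht
  · exact (hasDerivAt_arcsin_sub_mul _ (by linarith [ht.1]) (ht.2.trans hτ)).hasDerivWithinAt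
  · exact sub_nonpos.2 (inv_sqrt_one_sub_sq_le ht.1.le ht.2.le hτ)

lemma monotoneOn_arcsin_sub_mul {τ : ℝ} (hτ : 0 ≤ τ) :
    MonotoneOn (fun t => arcsin t - (√(1 - τ ^ 2))⁻¹ * t) (Icc τ 1) := by
  refine monotoneOn_of_hasDerivWithinAt_nonneg (convex_Icc τ 1)
    (f' := fun t => (√(1 - t ^ 2))⁻¹ - (√(1 - τ ^ 2))⁻¹)
    (continuous_arcsin.sub (continuous_const_mul _)).continuousOn
    (fun t ht => ?_) (fun t ht => ?_)
  all_goals rw [interior_Icc] at ht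
  · exact (hasDerivAt_arcsin_sub_mul _ (by linarith [ht.1]) ht.2).hasDerivWithinAt
  · exact sub_nonneg.2 (inv_sqrt_one_sub_sq_le hτ ht.1.le ht.2)

lemma exists_mem_Icc_cos_mul_sqrt_eq {ε : ℝ} (hε₀ : 0 ≤ ε) (hε : ε ≤ π / 2 - 1) :
    ∃ τ ∈ Icc 0 (cos ε), (π / 2 - ε - arcsin τ) * √(1 - τ ^ 2) = 1 - τ := by
  set f : ℝ → ℝ := fun t => (π / 2 - ε - arcsin t) * √(1 - t ^ 2) + t
  have harcsin : arcsin (cos ε) = π / 2 - ε := by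
    rw [arcsin_eq_pi_div_two_sub_arccos, arccos_cos hε₀ (by linarith [pi_pos])]
  have hcont : ContinuousOn f (Icc 0 (cos ε)) := by fun_prop
  have hcos : 0 ≤ cos ε := cos_nonneg_of_mem_Icc ⟨by linarith [pi_pos], by linarith⟩
  have hf : f (cos ε) ≤ 1 := by simp [f, harcsin, cos_le_one]
  have hf₀ : 1 ≤ f 0 := by simpa [f] using (by linarith : 1 ≤ π / 2 - ε)
  obtain ⟨τ, hτ, hfτ⟩ := intermediate_value_Icc' hcos hcont ⟨hf, hf₀⟩
  exact ⟨τ, hτ, by simp only [f] at hfτ; linarith⟩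

end Real

open Real in
/-- arcsin is ε-Lipschitz on [0,1] with L(ε) = (1 − τ(ε)²)^(−1/2). -/
theorem arcsin_eps_lipschitz :
    ∀ ε : ℝ, 0 < ε → ε < π / 2 - 1 →
      ∃ τ ∈ Set.Ico (0 : ℝ) 1,
        (π / 2 - ε - Real.arcsin τ) * Real.sqrt (1 - τ ^ 2) = 1 - τ ∧
        ∀ x ∈ Set.Icc (0 : ℝ) 1, ∀ y ∈ Set.Icc (0 : ℝ) 1,
          |Real.arcsin x - Real.arcsin y| ≤ (Real.sqrt (1 - τ ^ 2))⁻¹ * |x - y| + ε := by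
  intro ε hε hεπ
  obtain ⟨τ, ⟨hτ₀, hτε⟩, hτ⟩ := exists_mem_Icc_cos_mul_sqrt_eq hε.le hεπ.le
  have hτ₁ : τ < 1 := hτε.trans_lt <| by
    simpa using cos_lt_cos_of_nonneg_of_le_pi le_rfl (by linarith [pi_gt_three]) hε
  refine ⟨τ, ⟨hτ₀, hτ₁⟩, hτ, fun x hx y hy => ?_⟩
  set L := (√(1 - τ ^ 2))⁻¹
  have hgap : (arcsin 1 - L * 1) - (arcsin τ - L * τ) = ε := by
    have hL : √(1 - τ ^ 2) * L = 1 := mul_inv_cancel₀ (sqrt_pos.2 (by nlinarith)).ne'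
    rw [arcsin_one]
    linear_combination L * hτ - (π / 2 - ε - arcsin τ) * hL
  refine abs_sub_le_of_monotoneOn (monotone_arcsin.monotoneOn _) (fun u hu v hv hvu => ?_) hx hy
  have hg := sub_le_sub_of_antitoneOn_of_monotoneOn (antitoneOn_arcsin_sub_mul hτ₁)
    (monotoneOn_arcsin_sub_mul hτ₀) hv.1 hvu hu.2 hτ₁.le
  linear_combination hg + hgap
end

section
/- For every ε with 0 < ε < π/2 − 1, the equation (π/2 − ε − arcsin τ)·√(1 − τ²) = 1 − τ has a unique solution τ(ε) in the interval [0, 1). -/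
/-!
With `c = π/2 - ε ∈ (1, π/2)`, the derivative `-t (c - arcsin t) / √(1 - t²)` of `defect c`
is negative on `(0, sin c)`, while `defect c 0 = c - 1 > 0` and `defect c (sin c) = sin c - 1 < 0`;
so there is exactly one root in `[0, sin c]`. On `(sin c, 1)` the left-hand side of the equation
is `≤ 0 < 1 - t`, so there are no others.
-/

open Real Set

noncomputable section

namespace TauRoot

def defect (c t : ℝ) : ℝ := (c - arcsin t) * √(1 - t ^ 2) - (1 - t)

theorem defect_eq_zero_iff {c t : ℝ} :
    defect c t = 0 ↔ (c - arcsin t) * √(1 - t ^ 2) = 1 - t :=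
  sub_eq_zero

theorem continuous_defect (c : ℝ) : Continuous (defect c) := by
  unfold defect
  fun_prop

theorem hasDerivAt_defect (c : ℝ) {x : ℝ} (hx : x ∈ Ioo (-1 : ℝ) 1) :
    HasDerivAt (defect c) (-(x * (c - arcsin x) / √(1 - x ^ 2))) x := by
  have hpos : 0 < 1 - x ^ 2 := by nlinarith [hx.1, hx.2]
  have hsqrt : HasDerivAt (fun t => √(1 - t ^ 2)) (-(2 * x) / (2 * √(1 - x ^ 2))) x := by
    simpa using ((hasDerivAt_pow 2 x).const_sub 1).sqrt hpos.ne'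
  have h := (((hasDerivAt_arcsin hx.1.ne' hx.2.ne).const_sub c).mul hsqrt).sub
    ((hasDerivAt_id x).const_sub 1)
  refine h.congr_deriv ?_
  field_simp
  ring

theorem strictAntiOn_defect {c : ℝ} (hc : c ∈ Ioc (-(π / 2)) (π / 2)) :
    StrictAntiOn (defect c) (Icc 0 (sin c)) := by
  refine strictAntiOn_of_deriv_neg (convex_Icc 0 (sin c))
    (continuous_defect c).continuousOn fun x hx => ?_
  rw [interior_Icc] at hx
  have hx1 : x < 1 := hx.2.trans_le (sin_le_one c)
  rw [(hasDerivAt_defect c ⟨by linarith [hx.1], hx1⟩).deriv]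
  have harcsin : arcsin x < c := (arcsin_lt_iff_lt_sin' hc).2 hx.2
  have hpos : 0 < 1 - x ^ 2 := by nlinarith [hx.1]
  have : 0 < x * (c - arcsin x) / √(1 - x ^ 2) :=
    div_pos (mul_pos hx.1 (sub_pos.2 harcsin)) (sqrt_pos.2 hpos)
  linarith

theorem le_sin_of_root {c t : ℝ} (hc : c ∈ Ico (-(π / 2)) (π / 2)) (ht : t < 1)
    (hroot : (c - arcsin t) * √(1 - t ^ 2) = 1 - t) : t ≤ sin c := by
  by_contra! hlt
  have harcsin : c < arcsin t := (lt_arcsin_iff_sin_lt' hc).2 hlt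
  have : (c - arcsin t) * √(1 - t ^ 2) ≤ 0 :=
    mul_nonpos_of_nonpos_of_nonneg (by linarith) (sqrt_nonneg _)
  linarith

theorem existsUnique_root {c : ℝ} (h1c : 1 < c) (hc : c < π / 2) :
    ∃! t : ℝ, t ∈ Ico (0 : ℝ) 1 ∧ (c - arcsin t) * √(1 - t ^ 2) = 1 - t := by
  have hc_mem : c ∈ Ioo (-(π / 2)) (π / 2) := ⟨by linarith [pi_pos], hc⟩
  have hsin_pos : 0 < sin c := sin_pos_of_pos_of_lt_pi (by linarith) (by linarith [pi_pos])
  have hsin_lt : sin c < 1 := by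
    simpa using sin_lt_sin_of_lt_of_le_pi_div_two hc_mem.1.le le_rfl hc
  have hanti := strictAntiOn_defect (Ioo_subset_Ioc_self hc_mem)
  have hdefect_zero : defect c 0 = c - 1 := by simp [defect]
  have hdefect_sin : defect c (sin c) = sin c - 1 := by
    simp [defect, arcsin_sin hc_mem.1.le hc.le]
  obtain ⟨τ, hτ, hτ_root⟩ := intermediate_value_Icc' hsin_pos.le
    (continuous_defect c).continuousOn
    (show (0 : ℝ) ∈ Icc (defect c (sin c)) (defect c 0) from ⟨by linarith, by linarith⟩)
  refine ⟨τ, ⟨⟨hτ.1, hτ.2.trans_lt hsin_lt⟩, defect_eq_zero_iff.1 hτ_root⟩, ?_⟩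
  rintro t ⟨ht, ht_root⟩
  have ht_le : t ≤ sin c := le_sin_of_root (Ioo_subset_Ico_self hc_mem) ht.2 ht_root
  exact hanti.injOn ⟨ht.1, ht_le⟩ hτ (by rw [hτ_root, defect_eq_zero_iff.2 ht_root])

end TauRoot

end

open Real in
/-- For 0 < ε < π/2 − 1 the equation (π/2 − ε − arcsin τ)√(1−τ²) = 1 − τ has a
unique root in [0,1). -/
theorem tau_unique_root :
    ∀ ε : ℝ, 0 < ε → ε < π / 2 - 1 →
      ∃! τ : ℝ, τ ∈ Set.Ico (0 : ℝ) 1 ∧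
        (π / 2 - ε - Real.arcsin τ) * Real.sqrt (1 - τ ^ 2) = 1 - τ := by
  intro ε hε hε'
  exact TauRoot.existsUnique_root (c := π / 2 - ε) (by linarith) (by linarith)
end

section
/- The elevation-angle functions ψ_{I,j}(x, y) = π/4 + (−1)^j·(π/4 − (1/2)·arcsin(√(x² + y²)/v²)), j ∈ {1, 2}, are ε-Lipschitz on W_I = {(x, y) : √(x² + y²) ≤ v², x ≥ κ}: for every ε with 2ε ∈ (0, π/2 − 1), |ψ_{I,j}(x₁, y₁) − ψ_{I,j}(x₂, y₂)| ≤ (√2·v²·√(1 − τ(2ε)²))^(−1)·(|x₁ − x₂| + |y₁ − y₂|) + ε, where τ(2ε) is the root in [0,1) of (π/2 − 2ε − arcsin τ)·√(1 − τ²) = 1 − τ. -/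
/-!
Write `c = √(1 - τ²)`, the reciprocal of the slope of `arcsin` at `τ`. The function
`g r = arcsin r - r / c` decreases on `[0, τ]` and increases on `[τ, 1]`, so for
`0 ≤ a ≤ b ≤ 1` we get `g b - g a ≤ g 1 - g τ`: `arcsin` is `1/c`-Lipschitz on `[0, 1]` up to the
additive gap `g 1 - g τ = π/2 - arcsin τ - (1 - τ)/c`, which the defining equation of `τ` makes
equal to `2ε`. Since `(x, y) ↦ √(x² + y²)/v²` is `1/v²`-Lipschitz for the `ℓ¹` distance and
`ψ_{I,j}` is `±arcsin/2` up to a constant, this gives the bound with `2 ≥ √2` in the denominator.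
-/

open Real Set

section ArcsinMinusLine

variable {τ : ℝ}

lemma hasDerivAt_arcsin_sub_div {x : ℝ} (hx : x ∈ Ioo (-1) 1) (c : ℝ) :
    HasDerivAt (fun r => arcsin r - r / c) (1 / √(1 - x ^ 2) - 1 / c) x :=
  (hasDerivAt_arcsin hx.1.ne' hx.2.ne).sub ((hasDerivAt_id x).div_const c)

lemma continuous_arcsin_sub_div (c : ℝ) : Continuous fun r => arcsin r - r / c :=
  continuous_arcsin.sub (continuous_id.div_const c)

lemma antitoneOn_arcsin_sub_div (hτ₁ : τ < 1) :
    AntitoneOn (fun r => arcsin r - r / √(1 - τ ^ 2)) (Icc 0 τ) := by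
  refine antitoneOn_of_hasDerivWithinAt_nonpos
    (f' := fun x => 1 / √(1 - x ^ 2) - 1 / √(1 - τ ^ 2)) (convex_Icc 0 τ)
    (continuous_arcsin_sub_div _).continuousOn (fun x hx => ?_) fun x hx => ?_
  all_goals rw [interior_Icc] at hx; obtain ⟨hx₀, hxτ⟩ := hx
  · exact (hasDerivAt_arcsin_sub_div ⟨by linarith, by linarith⟩ _).hasDerivWithinAt
  · rw [sub_nonpos]
    gcongr
    exact sqrt_pos.2 (by nlinarith)

lemma monotoneOn_arcsin_sub_div (hτ₀ : 0 ≤ τ) :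
    MonotoneOn (fun r => arcsin r - r / √(1 - τ ^ 2)) (Icc τ 1) := by
  refine monotoneOn_of_hasDerivWithinAt_nonneg
    (f' := fun x => 1 / √(1 - x ^ 2) - 1 / √(1 - τ ^ 2)) (convex_Icc τ 1)
    (continuous_arcsin_sub_div _).continuousOn (fun x hx => ?_) fun x hx => ?_
  all_goals rw [interior_Icc] at hx; obtain ⟨hτx, hx₁⟩ := hx
  · exact (hasDerivAt_arcsin_sub_div ⟨by linarith, hx₁⟩ _).hasDerivWithinAt
  · rw [sub_nonneg]
    gcongr
    exact sqrt_pos.2 (by nlinarith)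

lemma arcsin_sub_div_le_of_mem_Icc (hτ₀ : 0 ≤ τ) (hτ₁ : τ < 1) {a : ℝ} (ha : a ∈ Icc 0 1) :
    arcsin τ - τ / √(1 - τ ^ 2) ≤ arcsin a - a / √(1 - τ ^ 2) := by
  rcases le_total a τ with haτ | hτa
  · exact antitoneOn_arcsin_sub_div hτ₁ ⟨ha.1, haτ⟩ ⟨hτ₀, le_rfl⟩ haτ
  · exact monotoneOn_arcsin_sub_div hτ₀ ⟨le_rfl, hτ₁.le⟩ ⟨hτa, ha.2⟩ hτa

lemma arcsin_sub_arcsin_le (hτ₀ : 0 ≤ τ) (hτ₁ : τ < 1) {a b : ℝ} (ha : 0 ≤ a) (hab : a ≤ b)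
    (hb : b ≤ 1) :
    arcsin b - arcsin a ≤
      (b - a) / √(1 - τ ^ 2) + (π / 2 - arcsin τ - (1 - τ) / √(1 - τ ^ 2)) := by
  have hmin_a := arcsin_sub_div_le_of_mem_Icc hτ₀ hτ₁ ⟨ha, hab.trans hb⟩
  have hmin_1 := arcsin_sub_div_le_of_mem_Icc hτ₀ hτ₁ ⟨zero_le_one, le_rfl⟩
  have hb_le : arcsin b - b / √(1 - τ ^ 2) ≤ arcsin a - a / √(1 - τ ^ 2) ∨
      arcsin b - b / √(1 - τ ^ 2) ≤ π / 2 - 1 / √(1 - τ ^ 2) := by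
    rcases le_total b τ with hbτ | hτb
    · exact .inl <| antitoneOn_arcsin_sub_div hτ₁ ⟨ha, hab.trans hbτ⟩ ⟨ha.trans hab, hbτ⟩ hab
    · exact .inr <| arcsin_one ▸ monotoneOn_arcsin_sub_div hτ₀ ⟨hτb, hb⟩ ⟨hτ₁.le, le_rfl⟩ hb
  rw [arcsin_one] at hmin_1
  rw [sub_div, sub_div]
  rcases hb_le with h | h <;> linarith

lemma abs_arcsin_sub_arcsin_le (hτ₀ : 0 ≤ τ) (hτ₁ : τ < 1) {a b : ℝ} (ha : a ∈ Icc 0 1)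
    (hb : b ∈ Icc 0 1) :
    |arcsin a - arcsin b| ≤
      |a - b| / √(1 - τ ^ 2) + (π / 2 - arcsin τ - (1 - τ) / √(1 - τ ^ 2)) := by
  wlog hab : a ≤ b generalizing a b
  · rw [abs_sub_comm, abs_sub_comm a]
    exact this hb ha (le_of_not_ge hab)
  rw [abs_sub_comm, abs_of_nonneg (sub_nonneg.2 (arcsin_le_arcsin hab)), abs_sub_comm,
    abs_of_nonneg (sub_nonneg.2 hab)]
  exact arcsin_sub_arcsin_le hτ₀ hτ₁ ha.1 hab hb.2

end ArcsinMinusLine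

lemma abs_sqrt_sub_sqrt_le_abs_add_abs (x₁ y₁ x₂ y₂ : ℝ) :
    |√(x₁ ^ 2 + y₁ ^ 2) - √(x₂ ^ 2 + y₂ ^ 2)| ≤ |x₁ - x₂| + |y₁ - y₂| := by
  rw [← Complex.norm_add_mul_I, ← Complex.norm_add_mul_I]
  calc _ ≤ ‖(x₁ + y₁ * Complex.I) - (x₂ + y₂ * Complex.I)‖ := abs_norm_sub_norm_le _ _
    _ ≤ _ := Complex.norm_le_abs_re_add_abs_im _
    _ = _ := by simp

lemma abs_psi_sub_psi (j : ℕ) (a b : ℝ) :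
    |(π / 4 + (-1 : ℝ) ^ j * (π / 4 - (1 / 2) * a))
      - (π / 4 + (-1 : ℝ) ^ j * (π / 4 - (1 / 2) * b))| = |a - b| / 2 := by
  rw [show _ - _ = (-1 : ℝ) ^ j * ((b - a) / 2) by ring, abs_mul, abs_pow, abs_neg, abs_one,
    one_pow, one_mul, abs_div, abs_two, abs_sub_comm]

open Real in
theorem psi_I_eps_lipschitz_general (v κ : ℝ) (hv : 0 < v) :
    ∀ ε : ℝ, 0 < 2 * ε → 2 * ε < π / 2 - 1 →
      ∀ τ : ℝ, τ ∈ Set.Ico (0 : ℝ) 1 →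
        (π / 2 - 2 * ε - Real.arcsin τ) * Real.sqrt (1 - τ ^ 2) = 1 - τ →
      ∀ j ∈ ({1, 2} : Set ℕ),
      ∀ x₁ y₁ x₂ y₂ : ℝ,
        Real.sqrt (x₁ ^ 2 + y₁ ^ 2) ≤ v ^ 2 → κ ≤ x₁ →
        Real.sqrt (x₂ ^ 2 + y₂ ^ 2) ≤ v ^ 2 → κ ≤ x₂ →
        |(π / 4 + (-1 : ℝ) ^ j * (π / 4
            - (1 / 2) * Real.arcsin (Real.sqrt (x₁ ^ 2 + y₁ ^ 2) / v ^ 2)))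
          - (π / 4 + (-1 : ℝ) ^ j * (π / 4
            - (1 / 2) * Real.arcsin (Real.sqrt (x₂ ^ 2 + y₂ ^ 2) / v ^ 2)))|
        ≤ (Real.sqrt 2 * v ^ 2 * Real.sqrt (1 - τ ^ 2))⁻¹ * (|x₁ - x₂| + |y₁ - y₂|) + ε := by
  intro ε _ _ τ ⟨hτ₀, hτ₁⟩ hτ j _ x₁ y₁ x₂ y₂ h₁ _ h₂ _
  have hc : 0 < √(1 - τ ^ 2) := sqrt_pos.2 (by nlinarith)
  have hv2 : 0 < v ^ 2 := by positivity
  have hgap : π / 2 - arcsin τ - (1 - τ) / √(1 - τ ^ 2) = 2 * ε := by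
    rw [← hτ]; field_simp; ring
  have hr {x y : ℝ} (h : √(x ^ 2 + y ^ 2) ≤ v ^ 2) : √(x ^ 2 + y ^ 2) / v ^ 2 ∈ Icc 0 1 :=
    ⟨by positivity, (div_le_one hv2).2 h⟩
  have hdist : |√(x₁ ^ 2 + y₁ ^ 2) / v ^ 2 - √(x₂ ^ 2 + y₂ ^ 2) / v ^ 2| ≤
      (|x₁ - x₂| + |y₁ - y₂|) / v ^ 2 := by
    rw [← sub_div, abs_div, abs_of_pos hv2]
    gcongr
    exact abs_sqrt_sub_sqrt_le_abs_add_abs x₁ y₁ x₂ y₂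
  rw [abs_psi_sub_psi]
  calc _ ≤ (|√(x₁ ^ 2 + y₁ ^ 2) / v ^ 2 - √(x₂ ^ 2 + y₂ ^ 2) / v ^ 2| / √(1 - τ ^ 2)
          + 2 * ε) / 2 := by
        gcongr
        exact hgap ▸ abs_arcsin_sub_arcsin_le hτ₀ hτ₁ (hr h₁) (hr h₂)
    _ ≤ ((|x₁ - x₂| + |y₁ - y₂|) / v ^ 2 / √(1 - τ ^ 2) + 2 * ε) / 2 := by gcongr
    _ = (2 * v ^ 2 * √(1 - τ ^ 2))⁻¹ * (|x₁ - x₂| + |y₁ - y₂|) + ε := by field_simp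
    _ ≤ (√2 * v ^ 2 * √(1 - τ ^ 2))⁻¹ * (|x₁ - x₂| + |y₁ - y₂|) + ε := by
        gcongr
        exact sqrt_le_iff.2 ⟨zero_le_two, by norm_num⟩

open Real in
/-- The elevation-angle functions ψ_{I,j} are ε-Lipschitz on W_I with
L(ε) = (√2 · v² · √(1 − τ(2ε)²))⁻¹. -/
theorem psi_I_eps_lipschitz (v κ : ℝ) (hv : 0 < v) (hκ : 0 < κ) (hκv : κ ≤ v ^ 2) :
    ∀ ε : ℝ, 0 < 2 * ε → 2 * ε < π / 2 - 1 →
      ∀ τ : ℝ, τ ∈ Set.Ico (0 : ℝ) 1 →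
        (π / 2 - 2 * ε - Real.arcsin τ) * Real.sqrt (1 - τ ^ 2) = 1 - τ →
      ∀ j ∈ ({1, 2} : Set ℕ),
      ∀ x₁ y₁ x₂ y₂ : ℝ,
        Real.sqrt (x₁ ^ 2 + y₁ ^ 2) ≤ v ^ 2 → κ ≤ x₁ →
        Real.sqrt (x₂ ^ 2 + y₂ ^ 2) ≤ v ^ 2 → κ ≤ x₂ →
        |(π / 4 + (-1 : ℝ) ^ j * (π / 4
            - (1 / 2) * Real.arcsin (Real.sqrt (x₁ ^ 2 + y₁ ^ 2) / v ^ 2)))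
          - (π / 4 + (-1 : ℝ) ^ j * (π / 4
            - (1 / 2) * Real.arcsin (Real.sqrt (x₂ ^ 2 + y₂ ^ 2) / v ^ 2)))|
        ≤ (Real.sqrt 2 * v ^ 2 * Real.sqrt (1 - τ ^ 2))⁻¹ * (|x₁ - x₂| + |y₁ - y₂|) + ε :=
  psi_I_eps_lipschitz_general v κ hv
end

section
/- The elevation-angle functions ψ_{II,j}(x, y, z) = arctan((x² + y²)^(−1/2)·[v² + (−1)^j·√(v⁴ − (x² + y² + 2v²z))]), j ∈ {1, 2}, are ε-Lipschitz on W_II: for every ε > 0, |ψ_{II,j}(N₁) − ψ_{II,j}(N₂)| ≤ κ^(−2)·(ρ/(2ε) + β√2)·‖N₁ − N₂‖₁ + ε, where β = v² + √(v⁴ − κ² − 2v²·z_min). -/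
lemma arctan_lip (a b : ℝ) : |Real.arctan a - Real.arctan b| ≤ |a - b| := by
  have h := Convex.norm_image_sub_le_of_norm_hasDerivWithin_le
    (f := Real.arctan) (f' := fun x => 1 / (1 + x ^ 2)) (s := Set.univ) (C := 1)
    (fun x _ => (Real.hasDerivAt_arctan x).hasDerivWithinAt)
    (fun x _ => by
      rw [Real.norm_eq_abs, abs_of_nonneg (by positivity)]
      rw [div_le_one (by positivity)]; nlinarith [sq_nonneg x])
    convex_univ (Set.mem_univ b) (Set.mem_univ a)
  simpa [Real.norm_eq_abs] using h

lemma sqrt_diff_le (a b : ℝ) : |Real.sqrt a - Real.sqrt b| ≤ Real.sqrt |a - b| := by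
  wlog hab : b ≤ a generalizing a b
  · rw [abs_sub_comm, abs_sub_comm a b]; exact this b a (le_of_not_ge hab)
  have hd : (0:ℝ) ≤ a - b := by linarith
  rw [abs_of_nonneg hd]
  rcases le_or_gt b 0 with hb | hb
  · have hb0 : Real.sqrt b = 0 := Real.sqrt_eq_zero'.mpr hb
    rw [hb0, sub_zero, abs_of_nonneg (Real.sqrt_nonneg a)]
    exact Real.sqrt_le_sqrt (by linarith)
  · have h1 : Real.sqrt b ≤ Real.sqrt a := Real.sqrt_le_sqrt hab
    rw [abs_of_nonneg (by linarith)]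
    have e1 : Real.sqrt b ^ 2 = b := Real.sq_sqrt hb.le
    have key : Real.sqrt a ≤ Real.sqrt b + Real.sqrt (a - b) := by
      have h2 : a ≤ (Real.sqrt b + Real.sqrt (a - b)) ^ 2 := by
        nlinarith [Real.sqrt_nonneg b, Real.sqrt_nonneg (a - b), Real.sq_sqrt hd]
      calc Real.sqrt a ≤ Real.sqrt ((Real.sqrt b + Real.sqrt (a - b)) ^ 2) :=
            Real.sqrt_le_sqrt h2
        _ = _ := Real.sqrt_sq (by positivity)
    linarith

lemma sqrt_le_linear {t δ : ℝ} (htn : 0 ≤ t) (hδ : 0 < δ) :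
    Real.sqrt t ≤ t / (2 * δ) + δ / 2 := by
  have hst : Real.sqrt t ^ 2 = t := Real.sq_sqrt htn
  have hsq := sq_nonneg (Real.sqrt t - δ)
  rw [div_add' _ _ _ (by positivity), le_div_iff₀ (by positivity)]
  nlinarith

lemma kappa_le_r {κ x y : ℝ} (hx : κ ≤ x) : κ ≤ Real.sqrt (x ^ 2 + y ^ 2) := by
  calc κ ≤ x := hx
    _ ≤ |x| := le_abs_self x
    _ = Real.sqrt (x ^ 2) := (Real.sqrt_sq_eq_abs x).symm
    _ ≤ Real.sqrt (x ^ 2 + y ^ 2) := Real.sqrt_le_sqrt (by nlinarith [sq_nonneg y])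

lemma abs_le_r (x y : ℝ) : |x| ≤ Real.sqrt (x ^ 2 + y ^ 2) := by
  rw [← Real.sqrt_sq_eq_abs]
  exact Real.sqrt_le_sqrt (by nlinarith [sq_nonneg y])

lemma r_diff_le (x₁ y₁ x₂ y₂ : ℝ) :
    |Real.sqrt (x₁ ^ 2 + y₁ ^ 2) - Real.sqrt (x₂ ^ 2 + y₂ ^ 2)| ≤ |x₁ - x₂| + |y₁ - y₂| := by
  set r₁ := Real.sqrt (x₁ ^ 2 + y₁ ^ 2)
  set r₂ := Real.sqrt (x₂ ^ 2 + y₂ ^ 2)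
  have hr1 : r₁ ^ 2 = x₁ ^ 2 + y₁ ^ 2 := Real.sq_sqrt (by positivity)
  have hr2 : r₂ ^ 2 = x₂ ^ 2 + y₂ ^ 2 := Real.sq_sqrt (by positivity)
  have hCS : x₁ * x₂ + y₁ * y₂ ≤ r₁ * r₂ := by
    have h1 : r₁ * r₂ = Real.sqrt ((x₁ ^ 2 + y₁ ^ 2) * (x₂ ^ 2 + y₂ ^ 2)) :=
      (Real.sqrt_mul (by positivity) _).symm
    have h2 : (x₁ * x₂ + y₁ * y₂) ^ 2 ≤ (x₁ ^ 2 + y₁ ^ 2) * (x₂ ^ 2 + y₂ ^ 2) := by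
      nlinarith [sq_nonneg (x₁ * y₂ - x₂ * y₁)]
    calc x₁ * x₂ + y₁ * y₂ ≤ |x₁ * x₂ + y₁ * y₂| := le_abs_self _
      _ = Real.sqrt ((x₁ * x₂ + y₁ * y₂) ^ 2) := (Real.sqrt_sq_eq_abs _).symm
      _ ≤ Real.sqrt ((x₁ ^ 2 + y₁ ^ 2) * (x₂ ^ 2 + y₂ ^ 2)) := Real.sqrt_le_sqrt h2
      _ = r₁ * r₂ := h1.symm
  have key : (r₁ - r₂) ^ 2 ≤ (|x₁ - x₂| + |y₁ - y₂|) ^ 2 := by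
    nlinarith [le_abs_self (x₁ - x₂), le_abs_self (y₁ - y₂), neg_abs_le (x₁ - x₂),
      neg_abs_le (y₁ - y₂), abs_nonneg (x₁ - x₂), abs_nonneg (y₁ - y₂)]
  calc |r₁ - r₂| = Real.sqrt ((r₁ - r₂) ^ 2) := (Real.sqrt_sq_eq_abs _).symm
    _ ≤ Real.sqrt ((|x₁ - x₂| + |y₁ - y₂|) ^ 2) := Real.sqrt_le_sqrt key
    _ = |x₁ - x₂| + |y₁ - y₂| := Real.sqrt_sq (by positivity)

set_option maxHeartbeats 1000000 in
/-- The elevation-angle functions ψ_{II,j} are ε-Lipschitz on W_II with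
L(ε) = κ⁻²·(ρ/(2ε) + β√2), β = v² + √(v⁴ − κ² − 2v²z_min). -/
theorem psi_II_eps_lipschitz (v κ zmin : ℝ) (hv : 0 < v) (hκ : 0 < κ) (hz : zmin < 0) :
    ∀ ε > (0 : ℝ), ∀ j ∈ ({1, 2} : Set ℕ),
    ∀ x₁ y₁ z₁ x₂ y₂ z₂ : ℝ,
      Real.sqrt (x₁ ^ 2 + y₁ ^ 2) ≤ v * Real.sqrt (v ^ 2 - 2 * zmin) → κ ≤ x₁ →
      zmin ≤ z₁ → z₁ ≤ (v ^ 2 - (x₁ ^ 2 + y₁ ^ 2) / v ^ 2) / 2 →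
      Real.sqrt (x₂ ^ 2 + y₂ ^ 2) ≤ v * Real.sqrt (v ^ 2 - 2 * zmin) → κ ≤ x₂ →
      zmin ≤ z₂ → z₂ ≤ (v ^ 2 - (x₂ ^ 2 + y₂ ^ 2) / v ^ 2) / 2 →
      |Real.arctan ((Real.sqrt (x₁ ^ 2 + y₁ ^ 2))⁻¹ *
          (v ^ 2 + (-1 : ℝ) ^ j * Real.sqrt (v ^ 4 - (x₁ ^ 2 + y₁ ^ 2 + 2 * v ^ 2 * z₁))))
        - Real.arctan ((Real.sqrt (x₂ ^ 2 + y₂ ^ 2))⁻¹ *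
          (v ^ 2 + (-1 : ℝ) ^ j * Real.sqrt (v ^ 4 - (x₂ ^ 2 + y₂ ^ 2 + 2 * v ^ 2 * z₂))))|
      ≤ κ⁻¹ ^ 2 * (v * Real.sqrt (v ^ 2 - 2 * zmin) / (2 * ε)
          + (v ^ 2 + Real.sqrt (v ^ 4 - κ ^ 2 - 2 * v ^ 2 * zmin)) * Real.sqrt 2)
        * (|x₁ - x₂| + |y₁ - y₂| + |z₁ - z₂|) + ε := by
  intro ε hε j hj x₁ y₁ z₁ x₂ y₂ z₂ hρ1 hx1 hz1 hzt1 hρ2 hx2 hz2 hzt2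
  have hκ0 : κ ≠ 0 := ne_of_gt hκ
  have hε0 : ε ≠ 0 := ne_of_gt hε
  set ρ := v * Real.sqrt (v ^ 2 - 2 * zmin) with hρdef
  set r₁ := Real.sqrt (x₁ ^ 2 + y₁ ^ 2) with hr1def
  set r₂ := Real.sqrt (x₂ ^ 2 + y₂ ^ 2) with hr2def
  set s₁ := Real.sqrt (v ^ 4 - (x₁ ^ 2 + y₁ ^ 2 + 2 * v ^ 2 * z₁)) with hs1def
  set s₂ := Real.sqrt (v ^ 4 - (x₂ ^ 2 + y₂ ^ 2 + 2 * v ^ 2 * z₂)) with hs2def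
  set σ := ((-1 : ℝ)) ^ j with hσdef
  set B := Real.sqrt (v ^ 4 - κ ^ 2 - 2 * v ^ 2 * zmin) with hBdef
  set D := |x₁ - x₂| + |y₁ - y₂| + |z₁ - z₂| with hDdef
  have hr1κ : κ ≤ r₁ := kappa_le_r hx1
  have hr2κ : κ ≤ r₂ := kappa_le_r hx2
  have hr1p : 0 < r₁ := lt_of_lt_of_le hκ hr1κ
  have hr2p : 0 < r₂ := lt_of_lt_of_le hκ hr2κ
  have hs1n : 0 ≤ s₁ := Real.sqrt_nonneg _
  have hs2n : 0 ≤ s₂ := Real.sqrt_nonneg _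
  have hBn : 0 ≤ B := Real.sqrt_nonneg _
  have hρn : 0 ≤ ρ := by positivity
  have hDn : 0 ≤ D := by positivity
  have hσ1 : |σ| = 1 := by rw [hσdef, abs_pow, abs_neg, abs_one, one_pow]
  have hv2ρ : v ^ 2 ≤ ρ := by
    have h1 : v ≤ Real.sqrt (v ^ 2 - 2 * zmin) := by
      have h2 : Real.sqrt (v ^ 2) ≤ Real.sqrt (v ^ 2 - 2 * zmin) :=
        Real.sqrt_le_sqrt (by linarith)
      rwa [Real.sqrt_sq hv.le] at h2
    calc v ^ 2 = v * v := sq v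
      _ ≤ v * Real.sqrt (v ^ 2 - 2 * zmin) := by nlinarith
  have hs1B : s₁ ≤ B := Real.sqrt_le_sqrt (by
    nlinarith [sq_nonneg y₁, mul_le_mul hx1 hx1 hκ.le (le_trans hκ.le hx1),
      mul_le_mul_of_nonneg_left hz1 (show (0:ℝ) ≤ 2 * v ^ 2 by positivity)])
  have hβ1 : |v ^ 2 + σ * s₁| ≤ v ^ 2 + B := by
    calc |v ^ 2 + σ * s₁| ≤ |v ^ 2| + |σ * s₁| := abs_add_le _ _
      _ = v ^ 2 + s₁ := by
          rw [abs_mul, hσ1, one_mul, abs_of_nonneg (by positivity), abs_of_nonneg hs1n]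
      _ ≤ v ^ 2 + B := by linarith
  -- ℓ∞ bounds on coordinates
  have hxρ1 : |x₁| ≤ ρ := le_trans (abs_le_r x₁ y₁) hρ1
  have hxρ2 : |x₂| ≤ ρ := le_trans (abs_le_r x₂ y₂) hρ2
  have hyρ1 : |y₁| ≤ ρ := by
    have h := abs_le_r y₁ x₁
    rw [add_comm (y₁ ^ 2)] at h
    exact le_trans h hρ1
  have hyρ2 : |y₂| ≤ ρ := by
    have h := abs_le_r y₂ x₂
    rw [add_comm (y₂ ^ 2)] at h
    exact le_trans h hρ2
  -- bound on |g₁ - g₂|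
  have hgx : |x₂ ^ 2 - x₁ ^ 2| ≤ 2 * ρ * |x₁ - x₂| := by
    rw [show x₂ ^ 2 - x₁ ^ 2 = (x₂ + x₁) * (x₂ - x₁) by ring, abs_mul, abs_sub_comm x₂ x₁]
    apply mul_le_mul_of_nonneg_right _ (abs_nonneg _)
    calc |x₂ + x₁| ≤ |x₂| + |x₁| := abs_add_le _ _
      _ ≤ 2 * ρ := by linarith
  have hgy : |y₂ ^ 2 - y₁ ^ 2| ≤ 2 * ρ * |y₁ - y₂| := by
    rw [show y₂ ^ 2 - y₁ ^ 2 = (y₂ + y₁) * (y₂ - y₁) by ring, abs_mul, abs_sub_comm y₂ y₁]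
    apply mul_le_mul_of_nonneg_right _ (abs_nonneg _)
    calc |y₂ + y₁| ≤ |y₂| + |y₁| := abs_add_le _ _
      _ ≤ 2 * ρ := by linarith
  have hgz : |2 * v ^ 2 * (z₂ - z₁)| ≤ 2 * ρ * |z₁ - z₂| := by
    rw [abs_mul, abs_of_nonneg (show (0:ℝ) ≤ 2 * v ^ 2 by positivity), abs_sub_comm z₂ z₁]
    exact mul_le_mul_of_nonneg_right (by linarith) (abs_nonneg _)
  have hg : |(v ^ 4 - (x₁ ^ 2 + y₁ ^ 2 + 2 * v ^ 2 * z₁))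
      - (v ^ 4 - (x₂ ^ 2 + y₂ ^ 2 + 2 * v ^ 2 * z₂))| ≤ 2 * ρ * D := by
    have he : (v ^ 4 - (x₁ ^ 2 + y₁ ^ 2 + 2 * v ^ 2 * z₁))
        - (v ^ 4 - (x₂ ^ 2 + y₂ ^ 2 + 2 * v ^ 2 * z₂))
        = (x₂ ^ 2 - x₁ ^ 2) + ((y₂ ^ 2 - y₁ ^ 2) + 2 * v ^ 2 * (z₂ - z₁)) := by ring
    have hsum : 2 * ρ * |x₁ - x₂| + 2 * ρ * |y₁ - y₂| + 2 * ρ * |z₁ - z₂| = 2 * ρ * D := by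
      rw [hDdef]; ring
    rw [he]
    calc |(x₂ ^ 2 - x₁ ^ 2) + ((y₂ ^ 2 - y₁ ^ 2) + 2 * v ^ 2 * (z₂ - z₁))|
        ≤ |x₂ ^ 2 - x₁ ^ 2| + |(y₂ ^ 2 - y₁ ^ 2) + 2 * v ^ 2 * (z₂ - z₁)| := abs_add_le _ _
      _ ≤ |x₂ ^ 2 - x₁ ^ 2| + (|y₂ ^ 2 - y₁ ^ 2| + |2 * v ^ 2 * (z₂ - z₁)|) := by
          linarith [abs_add_le (y₂ ^ 2 - y₁ ^ 2) (2 * v ^ 2 * (z₂ - z₁))]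
      _ ≤ 2 * ρ * D := by linarith
  -- bound on |s₁ - s₂|
  have hsd : |s₁ - s₂| ≤ 2 * ρ * D / (4 * ε * κ) + ε * κ := by
    have h1 : |s₁ - s₂| ≤ Real.sqrt |(v ^ 4 - (x₁ ^ 2 + y₁ ^ 2 + 2 * v ^ 2 * z₁))
        - (v ^ 4 - (x₂ ^ 2 + y₂ ^ 2 + 2 * v ^ 2 * z₂))| := sqrt_diff_le _ _
    set t := |(v ^ 4 - (x₁ ^ 2 + y₁ ^ 2 + 2 * v ^ 2 * z₁))
        - (v ^ 4 - (x₂ ^ 2 + y₂ ^ 2 + 2 * v ^ 2 * z₂))| with htdef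
    have htn : 0 ≤ t := abs_nonneg _
    have h2 : Real.sqrt t ≤ t / (4 * ε * κ) + ε * κ := by
      have h2' := sqrt_le_linear htn (show (0:ℝ) < 2 * ε * κ by positivity)
      calc Real.sqrt t ≤ t / (2 * (2 * ε * κ)) + 2 * ε * κ / 2 := h2'
        _ = t / (4 * ε * κ) + ε * κ := by ring_nf
    have h3 : t / (4 * ε * κ) ≤ 2 * ρ * D / (4 * ε * κ) :=
      (div_le_div_iff_of_pos_right (show (0:ℝ) < 4 * ε * κ by positivity)).mpr hg
    linarith
  -- bound on the arctan argument difference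
  have hAd : |r₁⁻¹ * (v ^ 2 + σ * s₁) - r₂⁻¹ * (v ^ 2 + σ * s₂)|
      ≤ (v ^ 2 + B) * |r₁ - r₂| / (r₁ * r₂) + |s₁ - s₂| / r₂ := by
    have key : r₁⁻¹ * (v ^ 2 + σ * s₁) - r₂⁻¹ * (v ^ 2 + σ * s₂)
        = ((v ^ 2 + σ * s₁) * (r₂ - r₁)) / (r₁ * r₂) + (σ * (s₁ - s₂)) / r₂ := by
      field_simp
      ring
    have t1 : |((v ^ 2 + σ * s₁) * (r₂ - r₁)) / (r₁ * r₂)|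
        ≤ (v ^ 2 + B) * |r₁ - r₂| / (r₁ * r₂) := by
      rw [abs_div, abs_mul, abs_of_pos (mul_pos hr1p hr2p), abs_sub_comm r₂ r₁]
      gcongr
    have t2 : |(σ * (s₁ - s₂)) / r₂| = |s₁ - s₂| / r₂ := by
      rw [abs_div, abs_mul, hσ1, one_mul, abs_of_pos hr2p]
    calc |r₁⁻¹ * (v ^ 2 + σ * s₁) - r₂⁻¹ * (v ^ 2 + σ * s₂)|
        ≤ |((v ^ 2 + σ * s₁) * (r₂ - r₁)) / (r₁ * r₂)| + |(σ * (s₁ - s₂)) / r₂| := by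
          rw [key]; exact abs_add_le _ _
      _ ≤ (v ^ 2 + B) * |r₁ - r₂| / (r₁ * r₂) + |s₁ - s₂| / r₂ := by rw [t2]; linarith
  -- denominator bounds
  have hd1 : (v ^ 2 + B) * |r₁ - r₂| / (r₁ * r₂)
      ≤ κ⁻¹ ^ 2 * ((v ^ 2 + B) * (|x₁ - x₂| + |y₁ - y₂|)) := by
    have hn : (v ^ 2 + B) * |r₁ - r₂| ≤ (v ^ 2 + B) * (|x₁ - x₂| + |y₁ - y₂|) :=
      mul_le_mul_of_nonneg_left (r_diff_le x₁ y₁ x₂ y₂) (by positivity)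
    calc (v ^ 2 + B) * |r₁ - r₂| / (r₁ * r₂)
        ≤ (v ^ 2 + B) * (|x₁ - x₂| + |y₁ - y₂|) / (κ * κ) :=
          div_le_div₀ (by positivity) hn (by positivity)
            (mul_le_mul hr1κ hr2κ hκ.le hr1p.le)
      _ = κ⁻¹ ^ 2 * ((v ^ 2 + B) * (|x₁ - x₂| + |y₁ - y₂|)) := by
          rw [div_eq_mul_inv, mul_inv]; ring
  have hd2 : |s₁ - s₂| / r₂ ≤ κ⁻¹ * |s₁ - s₂| := by
    calc |s₁ - s₂| / r₂ ≤ |s₁ - s₂| / κ :=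
          div_le_div₀ (abs_nonneg _) le_rfl hκ hr2κ
      _ = κ⁻¹ * |s₁ - s₂| := by rw [div_eq_mul_inv, mul_comm]
  have hspart : κ⁻¹ * |s₁ - s₂| ≤ κ⁻¹ ^ 2 * (ρ / (2 * ε)) * D + ε := by
    calc κ⁻¹ * |s₁ - s₂| ≤ κ⁻¹ * (2 * ρ * D / (4 * ε * κ) + ε * κ) :=
          mul_le_mul_of_nonneg_left hsd (by positivity)
      _ = κ⁻¹ ^ 2 * (ρ / (2 * ε)) * D + ε := by field_simp; ring
  have hsqrt2 : (1:ℝ) ≤ Real.sqrt 2 := by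
    rw [show (1:ℝ) = Real.sqrt 1 by simp]
    exact Real.sqrt_le_sqrt (by norm_num)
  have hfin : κ⁻¹ ^ 2 * ((v ^ 2 + B) * (|x₁ - x₂| + |y₁ - y₂|))
      ≤ κ⁻¹ ^ 2 * ((v ^ 2 + B) * Real.sqrt 2) * D := by
    have hD' : |x₁ - x₂| + |y₁ - y₂| ≤ D := by
      rw [hDdef]; linarith [abs_nonneg (z₁ - z₂)]
    have h1 : (v ^ 2 + B) * (|x₁ - x₂| + |y₁ - y₂|) ≤ (v ^ 2 + B) * Real.sqrt 2 * D := by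
      calc (v ^ 2 + B) * (|x₁ - x₂| + |y₁ - y₂|) ≤ (v ^ 2 + B) * D :=
            mul_le_mul_of_nonneg_left hD' (by positivity)
        _ = (v ^ 2 + B) * 1 * D := by ring
        _ ≤ (v ^ 2 + B) * Real.sqrt 2 * D :=
            mul_le_mul_of_nonneg_right
              (mul_le_mul_of_nonneg_left hsqrt2 (by positivity)) hDn
    calc κ⁻¹ ^ 2 * ((v ^ 2 + B) * (|x₁ - x₂| + |y₁ - y₂|))
        ≤ κ⁻¹ ^ 2 * ((v ^ 2 + B) * Real.sqrt 2 * D) :=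
          mul_le_mul_of_nonneg_left h1 (by positivity)
      _ = κ⁻¹ ^ 2 * ((v ^ 2 + B) * Real.sqrt 2) * D := by ring
  have harc := arctan_lip (r₁⁻¹ * (v ^ 2 + σ * s₁)) (r₂⁻¹ * (v ^ 2 + σ * s₂))
  have hring : κ⁻¹ ^ 2 * (ρ / (2 * ε) + (v ^ 2 + B) * Real.sqrt 2) * D
      = κ⁻¹ ^ 2 * ((v ^ 2 + B) * Real.sqrt 2) * D + κ⁻¹ ^ 2 * (ρ / (2 * ε)) * D := by ring
  linarith
end
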